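/- For a Riemann-symmetric tensor R and orthonormal basis, the fully contracted Clifford trace Σ_{a,b,s,t} R_{bats} · tr(c(v)c(e_a)c(w)c(e_b)c(e_s)c(e_t) + c(v)c(e_b)c(w)c(e_a)c(e_s)c(e_t)) = 0 for all vectors v, w. -/

import Mathlib

open scoped RealInnerProductSpace
open Finset

theorem Finset.sum_sum_eq_zero_of_antisymm {ι R : Type*} [NonAssocRing R] [NoZeroDivisors R]
    [CharZero R] (s : Finset ι) (f : ι → ι → R) (hf : ∀ a b, f b a = -f a b) :
    ∑ a ∈ s, ∑ b ∈ s, f a b = 0 := by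
  refine CharZero.eq_neg_self_iff.mp ?_
  calc ∑ a ∈ s, ∑ b ∈ s, f a b = ∑ a ∈ s, ∑ b ∈ s, f b a := Finset.sum_comm
    _ = ∑ a ∈ s, ∑ b ∈ s, -f a b := sum_congr rfl fun a _ => sum_congr rfl fun b _ => hf a b
    _ = -∑ a ∈ s, ∑ b ∈ s, f a b := by simp only [sum_neg_distrib]

theorem stmt16_general {V S : Type*} [NormedAddCommGroup V] [InnerProductSpace ℝ V]
    [AddCommGroup S] [Module ℂ S] (n : ℕ)
    (e : OrthonormalBasis (Fin n) ℝ V)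
    (c : V →ₗ[ℝ] Module.End ℂ S)
    (R : Fin n → Fin n → Fin n → Fin n → ℝ)
    (hR1 : ∀ i j k l, R i j k l = -R j i k l)
    (v w : V) :
    ∑ a : Fin n, ∑ b : Fin n, ∑ s : Fin n, ∑ t : Fin n,
        ((R b a t s : ℝ) : ℂ) *
          LinearMap.trace ℂ S
            (c v * c (e a) * c w * c (e b) * c (e s) * c (e t)
              + c v * c (e b) * c w * c (e a) * c (e s) * c (e t))
      = 0 := by
  -- the trace factor is symmetric in `a, b`, while `R b a t s` is antisymmetric
  refine Finset.sum_sum_eq_zero_of_antisymm _ _ fun a b => ?_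
  simp only [hR1 a b, Complex.ofReal_neg, neg_mul, sum_neg_distrib,
    add_comm (c v * c (e a) * _ * _ * _ * _)]

/-- for a 4-tensor `R` with the symmetries of the Riemann curvature
tensor (antisymmetry in each pair, pair-exchange symmetry, first Bianchi identity)
and an orthonormal basis `e`,
`Σ_{a,b,s,t} R_{bats} tr(c(v)c(e_a)c(w)c(e_b)c(e_s)c(e_t)
  + c(v)c(e_b)c(w)c(e_a)c(e_s)c(e_t)) = 0`. -/
theorem stmt16 {V S : Type*} [NormedAddCommGroup V] [InnerProductSpace ℝ V]
    [AddCommGroup S] [Module ℂ S] [Module.Finite ℂ S] (m n : ℕ) (hn : n = 2 * m)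
    (hV : Module.finrank ℝ V = n) (hS : Module.finrank ℂ S = 2 ^ m)
    (e : OrthonormalBasis (Fin n) ℝ V)
    (c : V →ₗ[ℝ] Module.End ℂ S)
    (hc : ∀ x y : V, c x * c y + c y * c x = ((-(2 * ⟪x, y⟫) : ℝ) : ℂ) • 1)
    (hirr : ∀ p : Submodule ℂ S, (∀ (x : V), ∀ s ∈ p, c x s ∈ p) → p = ⊥ ∨ p = ⊤)
    (R : Fin n → Fin n → Fin n → Fin n → ℝ)
    (hR1 : ∀ i j k l, R i j k l = -R j i k l)
    (hR2 : ∀ i j k l, R i j k l = -R i j l k)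
    (hR3 : ∀ i j k l, R i j k l = R k l i j)
    (hBianchi : ∀ i j k l, R i j k l + R i k l j + R i l j k = 0)
    (v w : V) :
    ∑ a : Fin n, ∑ b : Fin n, ∑ s : Fin n, ∑ t : Fin n,
        ((R b a t s : ℝ) : ℂ) *
          LinearMap.trace ℂ S
            (c v * c (e a) * c w * c (e b) * c (e s) * c (e t)
              + c v * c (e b) * c w * c (e a) * c (e s) * c (e t))
      = 0 :=
  stmt16_general n e c R hR1 v w
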